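/- Each Rauzy induction move r_ε (ε ∈ {0,1}) is a bijection from the set of irreducible permutations of {1,…,d} to itself; consequently, for every irreducible π and every ε there exists n > 0 with r_ε^n(π) = π. -/

import Mathlib

/-!
Both moves can be undone. The bottom move keeps the value `m = π (d-1)` in the last position and
moves the other values by a shift that is injective once `m` is known. The top move keeps `π` on
the positions up to `p = π⁻¹ (d-1)`, so `p` is also the position of `d-1` in the image, and the
later positions are recovered by shifting back. Injective self-maps of the finite set `Irr_d`
are bijections, and every point is periodic under them.
-/

/-- Irreducibility of a permutation of `{1,…,d}` (0-indexed). -/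
def RauzyIrreducible (d : ℕ) (π : Equiv.Perm (Fin d)) : Prop :=
  ∀ k : ℕ, 1 ≤ k → k < d → ¬ (∀ i : Fin d, i.val < k → (π i).val < k)

open Equiv

def rauzyBottomShift (d m x : ℕ) : ℕ :=
  if x ≤ m then x else if x < d - 1 then x + 1 else m + 1

theorem rauzyBottomShift_injOn (d m : ℕ) :
    Set.InjOn (rauzyBottomShift d m) (Set.Iio d) := by
  intro x hx y hy h
  simp only [Set.mem_Iio] at hx hy
  unfold rauzyBottomShift at h
  split_ifs at h <;> omega

/-- `σ = r_b(π)`, where `l` is the last position. -/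
def IsRauzyBottomMove {d : ℕ} (l : Fin d) (π σ : Perm (Fin d)) : Prop :=
  ∀ j, (σ j).val = rauzyBottomShift d (π l) (π j)

theorem IsRauzyBottomMove.eq {d : ℕ} {l : Fin d} {π π' σ : Perm (Fin d)}
    (hσ : IsRauzyBottomMove l π σ) (hσ' : IsRauzyBottomMove l π' σ) : π = π' := by
  have hlast : (π l).val = (π' l).val := by
    simpa only [rauzyBottomShift, le_refl, if_true] using (hσ l).symm.trans (hσ' l)
  ext j
  refine rauzyBottomShift_injOn d (π l) (π j).isLt (π' j).isLt ?_
  rw [← hσ, hσ', hlast]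

/-- `σ = r_t(π)`, where `l` is the last position. -/
def IsRauzyTopMove {d : ℕ} (l : Fin d) (π σ : Perm (Fin d)) : Prop :=
  ∀ j : Fin d, (j.val ≤ (π.symm l).val → σ j = π j) ∧
    (j.val = (π.symm l).val + 1 → σ j = π l) ∧
    ((π.symm l).val + 1 < j.val → σ j = π ⟨j.val - 1, lt_of_le_of_lt (Nat.sub_le _ _) j.isLt⟩)

theorem IsRauzyTopMove.symm_apply_eq {d : ℕ} {l : Fin d} {π σ : Perm (Fin d)}
    (h : IsRauzyTopMove l π σ) : σ.symm l = π.symm l := by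
  rw [Equiv.symm_apply_eq, (h _).1 le_rfl, π.apply_symm_apply]

theorem IsRauzyTopMove.eq {d : ℕ} {l : Fin d} {π π' σ : Perm (Fin d)}
    (hl : l.val = d - 1) (h : IsRauzyTopMove l π σ) (h' : IsRauzyTopMove l π' σ) : π = π' := by
  have hp : π.symm l = π'.symm l := h.symm_apply_eq.symm.trans h'.symm_apply_eq
  ext1 j
  rcases le_or_gt j.val (π.symm l).val with hle | hgt
  · rw [← (h j).1 hle, (h' j).1 (hp ▸ hle)]
  rcases lt_or_ge j.val (d - 1) with hjlt | hjge
  · have e := (h ⟨j.val + 1, by omega⟩).2.2 (by simp only; omega)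
    have e' := (h' ⟨j.val + 1, by omega⟩).2.2 (by simp only [← hp]; omega)
    simp only [Nat.add_sub_cancel, Fin.eta] at e e'
    exact e.symm.trans e'
  · have hj : j = l := Fin.ext (by omega)
    have hnext : (π.symm l).val + 1 < d := by omega
    subst hj
    rw [← (h ⟨_, hnext⟩).2.1 rfl, (h' ⟨_, hnext⟩).2.1 (by simp [hp])]

/-- Each Rauzy induction move is a bijection of the set of irreducible
permutations of `{1,…,d}` to itself; consequently each irreducible `π` is
recurrent under each move: some positive iterate returns to `π`.  Here `Rb`
is the bottom move (value-shifting rule) and `Rt` the top move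
(position-shifting rule), both 0-indexed, acting on the subtype of
irreducible permutations. -/
theorem rauzy_moves_bijective_and_recurrent (d : ℕ) (hd : 2 ≤ d)
    (Rb Rt : {π : Equiv.Perm (Fin d) // RauzyIrreducible d π} →
      {π : Equiv.Perm (Fin d) // RauzyIrreducible d π})
    (hRb : ∀ π : {π : Equiv.Perm (Fin d) // RauzyIrreducible d π}, ∀ j : Fin d,
      (((Rb π).val) j).val =
        if (π.val j).val ≤ (π.val ⟨d - 1, by omega⟩).val then (π.val j).val
        else if (π.val j).val < d - 1 then (π.val j).val + 1
        else (π.val ⟨d - 1, by omega⟩).val + 1)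
    (hRt : ∀ π : {π : Equiv.Perm (Fin d) // RauzyIrreducible d π}, ∀ j : Fin d,
      (j.val ≤ (π.val.symm ⟨d - 1, by omega⟩).val → (Rt π).val j = π.val j) ∧
      (j.val = (π.val.symm ⟨d - 1, by omega⟩).val + 1 →
        (Rt π).val j = π.val ⟨d - 1, by omega⟩) ∧
      ((π.val.symm ⟨d - 1, by omega⟩).val + 1 < j.val →
        (Rt π).val j = π.val ⟨j.val - 1, lt_of_le_of_lt (Nat.sub_le _ _) j.isLt⟩)) :
    Function.Bijective Rb ∧ Function.Bijective Rt ∧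
    (∀ π, ∃ n : ℕ, 0 < n ∧ Rb^[n] π = π) ∧
    (∀ π, ∃ n : ℕ, 0 < n ∧ Rt^[n] π = π) := by
  have hl : (⟨d - 1, by omega⟩ : Fin d).val = d - 1 := rfl
  have hRb_inj : Function.Injective Rb := fun π π' h =>
    Subtype.ext <| IsRauzyBottomMove.eq (hRb π) (h ▸ hRb π')
  have hRt_inj : Function.Injective Rt := fun π π' h =>
    Subtype.ext <| IsRauzyTopMove.eq hl (hRt π) (h ▸ hRt π')
  exact ⟨Finite.injective_iff_bijective.mp hRb_inj, Finite.injective_iff_bijective.mp hRt_inj,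
    hRb_inj.mem_periodicPts, hRt_inj.mem_periodicPts⟩
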